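/- In the free group F₂ = ⟨a, b⟩, the automorphism φ defined by a ↦ ab, b ↦ b has fixed subgroup equal to the subgroup generated by b and aba⁻¹. -/

import Mathlib

/-!
Write `T` for the endomorphism `a ↦ ab, b ↦ b`. It turns each `a` of a reduced word into `ab` and
each `a⁻¹` into `b⁻¹a⁻¹`, so in the reduced form of `T u` only inserted letters can cancel, and the
first letter of `u` controls that of `T u`: `T u` starts with `a` if `u` does, and with `b⁻¹` if
`u` starts with `a⁻¹`.

Peel off the first letter of a fixed `u`: if `u = b^±1 v` then `v` is fixed, `u` cannot start
with `a⁻¹`, and if `u = a v` then `T v = b⁻¹ v`. For solutions of this twisted equation,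
`u = b^±1 v` reduces to `v` because `a b^±1 v = (aba⁻¹)^±1 (a v)`, `u` cannot start with `a`,
and `u = a⁻¹ v` gives a fixed `v = a u`. By induction, fixed `u` lie in `⟨b, aba⁻¹⟩`, and so
does `a u` for twisted `u`.
-/

def fixedSubgroup {G : Type*} [Group G] (φ : G →* G) : Subgroup G where
  carrier := {g : G | φ g = g}
  one_mem' := map_one φ
  mul_mem' := by
    intro x y hx hy
    simp only [Set.mem_setOf_eq, map_mul] at *
    rw [hx, hy]
  inv_mem' := by
    intro x hx
    simp only [Set.mem_setOf_eq, map_inv] at *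
    rw [hx]

namespace FreeGroup

variable {α : Type*}

theorem isReduced_cons {x : α × Bool} {L : List (α × Bool)} :
    IsReduced (x :: L) ↔ L.head? ≠ some (x.1, !x.2) ∧ IsReduced L := by
  cases L with
  | nil => simp [IsReduced.singleton, IsReduced.nil]
  | cons y L =>
    obtain ⟨x₁, x₂⟩ := x
    obtain ⟨y₁, y₂⟩ := y
    rw [isReduced_cons_cons]
    cases x₂ <;> cases y₂ <;> simp [eq_comm]

variable [DecidableEq α]

theorem toWord_mk_of_isReduced {L : List (α × Bool)} (h : IsReduced L) : (mk L).toWord = L := by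
  rw [toWord_mk, h.reduce_eq]

theorem toWord_mk_singleton_mul {x : α × Bool} {u : FreeGroup α}
    (h : u.toWord.head? ≠ some (x.1, !x.2)) : (mk [x] * u).toWord = x :: u.toWord := by
  conv_lhs => rw [← mk_toWord (x := u), mul_mk]
  exact toWord_mk_of_isReduced (isReduced_cons.2 ⟨h, isReduced_toWord⟩)

theorem head?_toWord_of_mul {i : α} {u : FreeGroup α} (h : u.toWord.head? ≠ some (i, false)) :
    (of i * u).toWord.head? = some (i, true) := by
  rw [of, toWord_mk_singleton_mul h, List.head?_cons]

theorem head?_toWord_inv_of_mul {i : α} {u : FreeGroup α} (h : u.toWord.head? ≠ some (i, true)) :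
    ((of i)⁻¹ * u).toWord.head? = some (i, false) := by
  rw [show (of i)⁻¹ = mk [(i, false)] from rfl, toWord_mk_singleton_mul h, List.head?_cons]

theorem induction_on_toWord {C : FreeGroup α → Prop} (u : FreeGroup α) (one : C 1)
    (of_mul : ∀ i u, u.toWord.head? ≠ some (i, false) → C u → C (of i * u))
    (inv_of_mul : ∀ i u, u.toWord.head? ≠ some (i, true) → C u → C ((of i)⁻¹ * u)) : C u := by
  suffices ∀ L, IsReduced L → C (mk L) from mk_toWord (x := u) ▸ this _ isReduced_toWord
  intro L hL
  induction L with
  | nil => exact one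
  | cons x L ih =>
    obtain ⟨hx, hL'⟩ := isReduced_cons.1 hL
    rw [← toWord_mk_of_isReduced hL'] at hx
    rw [← List.singleton_append, ← mul_mk]
    obtain ⟨i, _ | _⟩ := x
    · exact inv_of_mul i _ hx (ih hL')
    · exact of_mul i _ hx (ih hL')

end FreeGroup

open FreeGroup

def transvection : FreeGroup (Fin 2) →* FreeGroup (Fin 2) := lift ![of 0 * of 1, of 1]

theorem transvection_of_zero : transvection (of 0) = of 0 * of 1 := by
  simp [transvection]

theorem transvection_of_one : transvection (of 1) = of 1 := by
  simp [transvection]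

theorem transvection_of_zero_mul (u : FreeGroup (Fin 2)) :
    transvection (of 0 * u) = of 0 * (of 1 * transvection u) := by
  simp [transvection_of_zero, mul_assoc]

theorem transvection_inv_of_zero_mul (u : FreeGroup (Fin 2)) :
    transvection ((of 0)⁻¹ * u) = (of 1)⁻¹ * ((of 0)⁻¹ * transvection u) := by
  simp [transvection_of_zero, mul_assoc]

theorem transvection_of_one_mul (u : FreeGroup (Fin 2)) :
    transvection (of 1 * u) = of 1 * transvection u := by
  simp [transvection_of_one]

theorem transvection_inv_of_one_mul (u : FreeGroup (Fin 2)) :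
    transvection ((of 1)⁻¹ * u) = (of 1)⁻¹ * transvection u := by
  simp [transvection_of_one]

theorem head?_toWord_transvection_of_zero_mul {u : FreeGroup (Fin 2)}
    (h : (of 1 * transvection u).toWord.head? ≠ some (0, false)) :
    (transvection (of 0 * u)).toWord.head? = some (0, true) := by
  rw [transvection_of_zero_mul, head?_toWord_of_mul h]

theorem head?_toWord_transvection_inv_of_zero_mul {u : FreeGroup (Fin 2)}
    (h : (transvection u).toWord.head? ≠ some (0, true)) :
    (transvection ((of 0)⁻¹ * u)).toWord.head? = some (1, false) := by
  rw [transvection_inv_of_zero_mul]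
  exact head?_toWord_inv_of_mul (by rw [head?_toWord_inv_of_mul h]; decide)

/-- Letters `(0, true)`, `(0, false)`, `(1, true)`, `(1, false)` are `a`, `a⁻¹`, `b`, `b⁻¹`.
The first letter of `b * T u` has to be tracked as well, because `T (a * v) = a * (b * T v)`. -/
theorem head?_toWord_transvection (u : FreeGroup (Fin 2)) :
    (u.toWord.head? ≠ some (0, false) →
      (of 1 * transvection u).toWord.head? ≠ some (0, false)) ∧
    (u.toWord.head? ≠ some (0, true) → (transvection u).toWord.head? ≠ some (0, true)) ∧
    (u.toWord.head? ≠ some (1, false) →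
      (of 1 * transvection u).toWord.head? = some (1, true) ∨
        (of 1 * transvection u).toWord.head? = some (0, false)) ∧
    (u.toWord.head? ≠ some (1, true) →
      (transvection u).toWord.head? ≠ some (1, true) ∧
        (transvection u).toWord.head? ≠ some (0, false)) := by
  induction u using induction_on_toWord with
  | one => simp [toWord_of]
  | of_mul i v hv ih =>
    obtain ⟨hA, -, hB, -⟩ := ih
    have hu := head?_toWord_of_mul hv
    match i with
    | 0 =>
      have hT := head?_toWord_transvection_of_zero_mul (hA hv)
      have hbT : (of 1 * transvection (of 0 * v)).toWord.head? = some (1, true) :=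
        head?_toWord_of_mul (by rw [hT]; decide)
      simp only [hu, hT, hbT]
      decide
    | 1 =>
      rw [transvection_of_one_mul]
      have hbT : (of 1 * (of 1 * transvection v)).toWord.head? = some (1, true) :=
        head?_toWord_of_mul (by rcases hB hv with h | h <;> rw [h] <;> decide)
      rcases hB hv with h | h <;> simp [hu, hbT, h]
  | inv_of_mul i v hv ih =>
    obtain ⟨-, ha, -, hb⟩ := ih
    have hu := head?_toWord_inv_of_mul hv
    match i with
    | 0 =>
      have hT := head?_toWord_transvection_inv_of_zero_mul (ha hv)
      have hbT : (of 1 * transvection ((of 0)⁻¹ * v)).toWord.head? = some (0, false) := by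
        rw [transvection_inv_of_zero_mul, mul_inv_cancel_left]
        exact head?_toWord_inv_of_mul (ha hv)
      simp only [hu, hT, hbT]
      decide
    | 1 =>
      rw [transvection_inv_of_one_mul, mul_inv_cancel_left]
      have hT := head?_toWord_inv_of_mul (hb hv).1
      simp [hu, hT, (hb hv).2]

theorem transvection_of_zero_mul_ne {v : FreeGroup (Fin 2)}
    (hv : v.toWord.head? ≠ some (0, false)) :
    transvection (of 0 * v) ≠ (of 1)⁻¹ * (of 0 * v) := by
  intro h
  have hT := head?_toWord_transvection_of_zero_mul ((head?_toWord_transvection v).1 hv)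
  rw [h, head?_toWord_inv_of_mul (by rw [head?_toWord_of_mul hv]; decide)] at hT
  simp at hT

theorem transvection_inv_of_zero_mul_ne {v : FreeGroup (Fin 2)}
    (hv : v.toWord.head? ≠ some (0, true)) :
    transvection ((of 0)⁻¹ * v) ≠ (of 0)⁻¹ * v := by
  intro h
  have hT := head?_toWord_transvection_inv_of_zero_mul ((head?_toWord_transvection v).2.1 hv)
  rw [h, head?_toWord_inv_of_mul hv] at hT
  simp at hT

local notation "𝓗" => Subgroup.closure ({of 1, of 0 * of 1 * (of 0)⁻¹} : Set (FreeGroup (Fin 2)))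

/-- The second clause is what `T (a * v) = a * v` becomes after cancelling `a`. -/
theorem mem_closure_of_transvection_eq (u : FreeGroup (Fin 2)) :
    (transvection u = u → u ∈ 𝓗) ∧ (transvection u = (of 1)⁻¹ * u → of 0 * u ∈ 𝓗) := by
  have hb : of 1 ∈ 𝓗 := Subgroup.subset_closure (Set.mem_insert _ _)
  have hc : of 0 * of 1 * (of 0)⁻¹ ∈ 𝓗 := Subgroup.subset_closure (Set.mem_insert_of_mem _ rfl)
  induction u using induction_on_toWord with
  | one =>
    refine ⟨fun _ => one_mem _, fun h => absurd ?_ (of_ne_one (1 : Fin 2))⟩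
    simpa using h.symm
  | of_mul i v hv ih =>
    match i with
    | 0 =>
      refine ⟨fun h => ih.2 ?_, fun h => absurd h (transvection_of_zero_mul_ne hv)⟩
      rwa [transvection_of_zero_mul, mul_right_inj, ← eq_inv_mul_iff_mul_eq] at h
    | 1 =>
      rw [transvection_of_one_mul, mul_right_inj, inv_mul_cancel_left, ← eq_inv_mul_iff_mul_eq]
      refine ⟨fun h => mul_mem hb (ih.1 h), fun h => ?_⟩
      rw [show of 0 * (of 1 * v) = of 0 * of 1 * (of 0)⁻¹ * (of 0 * v) by group]
      exact mul_mem hc (ih.2 h)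
  | inv_of_mul i v hv ih =>
    match i with
    | 0 =>
      refine ⟨fun h => absurd h (transvection_inv_of_zero_mul_ne hv), fun h => ?_⟩
      rw [transvection_inv_of_zero_mul, mul_right_inj, mul_right_inj] at h
      rw [mul_inv_cancel_left]
      exact ih.1 h
    | 1 =>
      rw [transvection_inv_of_one_mul, mul_right_inj, mul_right_inj]
      refine ⟨fun h => mul_mem (inv_mem hb) (ih.1 h), fun h => ?_⟩
      rw [show of 0 * ((of 1)⁻¹ * v) = (of 0 * of 1 * (of 0)⁻¹)⁻¹ * (of 0 * v) by group]
      exact mul_mem (inv_mem hc) (ih.2 h)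

theorem fixedSubgroup_transvection : fixedSubgroup transvection = 𝓗 := by
  refine le_antisymm (fun u hu => (mem_closure_of_transvection_eq u).1 hu) ?_
  rw [Subgroup.closure_le, Set.insert_subset_iff, Set.singleton_subset_iff]
  refine ⟨transvection_of_one, ?_⟩
  change transvection _ = _
  simp [transvection_of_zero, transvection_of_one, mul_assoc]

theorem fix_of_transvection (φ : FreeGroup (Fin 2) ≃* FreeGroup (Fin 2))
    (ha : φ (FreeGroup.of 0) = FreeGroup.of 0 * FreeGroup.of 1)
    (hb : φ (FreeGroup.of 1) = FreeGroup.of 1) :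
    fixedSubgroup φ.toMonoidHom =
      Subgroup.closure {FreeGroup.of 1,
        FreeGroup.of 0 * FreeGroup.of 1 * (FreeGroup.of 0)⁻¹} := by
  have hφ : φ.toMonoidHom = transvection := by
    ext i
    fin_cases i
    · simpa [transvection_of_zero] using ha
    · simpa [transvection_of_one] using hb
  rw [hφ, fixedSubgroup_transvection]
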